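/- Let U be a symmetric, invertible real n×n matrix, W = U², and let σ(t) = 1/(1 + e^{−t}). Define f : ℝⁿ → ℝ by f(z) = ‖z‖²/2 − Σ_{i=1}^n [ U_iᵀz + log(exp(−U_iᵀz) + 1) ]. If z : ℕ → ℝⁿ is the gradient descent sequence z_{k+1} = z_k − ∇f(z_k) and x_k = U⁻¹ z_k, then for every k, x_{k+1} = σ(W x_k) with σ applied entrywise; i.e., the feedforward sigmoid network propagation x_{k+1} = σ(W x_k) is equivalent to gradient descent on this concrete f. -/

import Mathlib

open scoped RealInnerProductSpace

/-- Matrix-vector multiplication on Euclidean space. -/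
noncomputable def mvE {n : ℕ} (U : Matrix (Fin n) (Fin n) ℝ)
    (v : EuclideanSpace ℝ (Fin n)) : EuclideanSpace ℝ (Fin n) :=
  WithLp.toLp 2 (U.mulVec v)

/-- Entrywise application of a scalar function to a vector. -/
noncomputable def appE {n : ℕ} (Φ : ℝ → ℝ)
    (v : EuclideanSpace ℝ (Fin n)) : EuclideanSpace ℝ (Fin n) :=
  WithLp.toLp 2 (fun i => Φ (v i))

/-! The gradient of `z ↦ ‖z‖² / 2 - ∑ᵢ Ψ ⟪uᵢ, z⟫` is `z - ∑ᵢ Ψ' ⟪uᵢ, z⟫ • uᵢ`, and for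
`Ψ t = t + log (exp (-t) + 1)` the derivative `Ψ'` is the sigmoid. Taking for `uᵢ` the columns of
`U`, a unit gradient step therefore sends `z` to `U σ(Uᵀ z)`. For symmetric `U` and `z = U x` this
is `U x' = U σ(U² x)`, i.e. `x' = σ(W x)`. -/

open scoped Matrix

noncomputable def sigmoid (t : ℝ) : ℝ := 1 / (1 + Real.exp (-t))

theorem hasDerivAt_add_log_exp_neg_add_one (t : ℝ) :
    HasDerivAt (fun s ↦ s + Real.log (Real.exp (-s) + 1)) (sigmoid t) t := by
  have hexp : HasDerivAt (fun s ↦ Real.exp (-s) + 1) (-Real.exp (-t)) t := by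
    simpa using (hasDerivAt_neg t).exp.add_const 1
  refine ((hasDerivAt_id' t).add (hexp.log (by positivity))).congr_deriv ?_
  have : 1 + Real.exp (-t) ≠ 0 := by positivity
  rw [sigmoid]
  field_simp
  ring

section GradientDescent

variable {E ι : Type*} [NormedAddCommGroup E] [InnerProductSpace ℝ E] [CompleteSpace E]
  [Fintype ι]

theorem hasGradientAt_half_norm_sq_sub_sum_comp_inner {Ψ ψ : ℝ → ℝ}
    (hΨ : ∀ t, HasDerivAt Ψ (ψ t) t) (a : ι → E) (z : E) :
    HasGradientAt (fun v ↦ ‖v‖ ^ 2 / 2 - ∑ i, Ψ ⟪a i, v⟫) (z - ∑ i, ψ ⟪a i, z⟫ • a i) z := by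
  have hnorm : HasFDerivAt (fun v : E ↦ ‖v‖ ^ 2 / 2) (innerSL ℝ z) z := by
    have h := (hasStrictFDerivAt_norm_sq z).hasFDerivAt.mul_const (1 / 2 : ℝ)
    simp only [← div_eq_mul_one_div] at h
    exact h.congr_fderiv (by ext v; simp)
  have hsum : HasFDerivAt (fun v ↦ ∑ i, Ψ ⟪a i, v⟫) (∑ i, ψ ⟪a i, z⟫ • innerSL ℝ (a i)) z :=
    HasFDerivAt.fun_sum fun i _ ↦ (hΨ _).comp_hasFDerivAt z (innerSL ℝ (a i)).hasFDerivAt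
  have hF : HasFDerivAt (fun v ↦ ‖v‖ ^ 2 / 2 - ∑ i, Ψ ⟪a i, v⟫)
      (innerSL ℝ (z - ∑ i, ψ ⟪a i, z⟫ • a i)) z := by
    refine (hnorm.sub hsum).congr_fderiv ?_
    ext v
    simp
  exact hasGradientAt_iff_hasFDerivAt.2 hF

theorem sub_gradient_half_norm_sq_sub_sum_comp_inner {Ψ ψ : ℝ → ℝ}
    (hΨ : ∀ t, HasDerivAt Ψ (ψ t) t) (a : ι → E) (z : E) :
    z - gradient (fun v ↦ ‖v‖ ^ 2 / 2 - ∑ i, Ψ ⟪a i, v⟫) z = ∑ i, ψ ⟪a i, z⟫ • a i := by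
  rw [(hasGradientAt_half_norm_sq_sub_sum_comp_inner hΨ a z).gradient, sub_sub_cancel]

end GradientDescent

theorem inner_toLp_transpose_apply {m n : Type*} [Fintype m] (U : Matrix m n ℝ) (i : n)
    (v : EuclideanSpace ℝ m) :
    ⟪WithLp.toLp 2 (Uᵀ i), v⟫ = ∑ j, U j i * v j := by
  simp [PiLp.inner_apply, mul_comm]

theorem sum_smul_toLp_transpose_apply {m n : Type*} [Fintype n] (U : Matrix m n ℝ)
    (c : n → ℝ) :
    ∑ i, c i • WithLp.toLp 2 (Uᵀ i) = WithLp.toLp 2 (U *ᵥ c) := by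
  ext j
  simp [Matrix.mulVec, dotProduct, mul_comm]

theorem mvE_mvE {n : ℕ} (A B : Matrix (Fin n) (Fin n) ℝ) (v : EuclideanSpace ℝ (Fin n)) :
    mvE A (mvE B v) = mvE (A * B) v := by
  simp [mvE, Matrix.mulVec_mulVec]

theorem mvE_inv_mvE {n : ℕ} {U : Matrix (Fin n) (Fin n) ℝ} (hU : IsUnit U.det)
    (v : EuclideanSpace ℝ (Fin n)) : mvE U⁻¹ (mvE U v) = v := by
  simp [Matrix.nonsing_inv_mul U hU, mvE]

theorem mvE_mvE_inv {n : ℕ} {U : Matrix (Fin n) (Fin n) ℝ} (hU : IsUnit U.det)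
    (v : EuclideanSpace ℝ (Fin n)) : mvE U (mvE U⁻¹ v) = v := by
  simp [Matrix.mul_nonsing_inv U hU, mvE]

theorem sub_gradient_eq_mvE_appE_sigmoid {n : ℕ} {U : Matrix (Fin n) (Fin n) ℝ}
    (hU : U.IsSymm) {f : EuclideanSpace ℝ (Fin n) → ℝ}
    (hf : ∀ z : EuclideanSpace ℝ (Fin n),
      f z = ‖z‖ ^ 2 / 2
        - ∑ i, ((∑ j, U j i * z j) + Real.log (Real.exp (-(∑ j, U j i * z j)) + 1)))
    (v : EuclideanSpace ℝ (Fin n)) :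
    v - gradient f v = mvE U (appE sigmoid (mvE U v)) := by
  have hf' : f = fun z ↦ ‖z‖ ^ 2 / 2 - ∑ i, (fun s ↦ s + Real.log (Real.exp (-s) + 1))
      ⟪WithLp.toLp 2 (Uᵀ i), z⟫ := by
    funext z
    simp only [hf, inner_toLp_transpose_apply]
  rw [hf', sub_gradient_half_norm_sq_sub_sum_comp_inner hasDerivAt_add_log_exp_neg_add_one,
    sum_smul_toLp_transpose_apply]
  congr
  ext i
  simp [appE, mvE, inner_toLp_transpose_apply, Matrix.mulVec, dotProduct, hU.apply]

theorem sigmoid_network_is_gradient_descent_general (n : ℕ)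
    (U : Matrix (Fin n) (Fin n) ℝ) (hU : U.IsSymm) (hUinv : IsUnit U.det)
    (W : Matrix (Fin n) (Fin n) ℝ) (hW : W = U ^ 2)
    (f : EuclideanSpace ℝ (Fin n) → ℝ)
    (hf : ∀ z : EuclideanSpace ℝ (Fin n),
      f z = ‖z‖ ^ 2 / 2
        - ∑ i, ((∑ j, U j i * z j) + Real.log (Real.exp (-(∑ j, U j i * z j)) + 1)))
    (z x : ℕ → EuclideanSpace ℝ (Fin n))
    (hz : ∀ k : ℕ, z (k + 1) = z k - gradient f (z k))
    (hx : ∀ k : ℕ, x k = mvE U⁻¹ (z k)) :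
    ∀ k : ℕ, x (k + 1) = appE (fun t => 1 / (1 + Real.exp (-t))) (mvE W (x k)) := by
  intro k
  have hzx : z k = mvE U (x k) := by rw [hx, mvE_mvE_inv hUinv]
  calc x (k + 1) = mvE U⁻¹ (mvE U (appE sigmoid (mvE U (z k)))) := by
        rw [hx, hz, sub_gradient_eq_mvE_appE_sigmoid hU hf]
    _ = appE sigmoid (mvE W (x k)) := by rw [mvE_inv_mvE hUinv, hzx, mvE_mvE, hW, sq]

/-- for symmetric invertible `U`, `W = U²`, and
`f(z) = ‖z‖²/2 − ∑ᵢ [Uᵢᵀz + log(exp(−Uᵢᵀz) + 1)]`, if `z` is the gradient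
descent sequence `z_{k+1} = z_k − ∇f(z_k)` and `x_k = U⁻¹ z_k`, then for every
`k`, `x_{k+1} = σ(W x_k)` with the sigmoid `σ(t) = 1/(1 + e^{−t})` applied
entrywise: the feedforward sigmoid network propagation is equivalent to
gradient descent on this concrete `f`. -/
theorem sigmoid_network_is_gradient_descent (n : ℕ) (hn : 0 < n)
    (U : Matrix (Fin n) (Fin n) ℝ) (hU : U.IsSymm) (hUinv : IsUnit U.det)
    (W : Matrix (Fin n) (Fin n) ℝ) (hW : W = U ^ 2)
    (f : EuclideanSpace ℝ (Fin n) → ℝ)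
    (hf : ∀ z : EuclideanSpace ℝ (Fin n),
      f z = ‖z‖ ^ 2 / 2
        - ∑ i, ((∑ j, U j i * z j) + Real.log (Real.exp (-(∑ j, U j i * z j)) + 1)))
    (z x : ℕ → EuclideanSpace ℝ (Fin n))
    (hz : ∀ k : ℕ, z (k + 1) = z k - gradient f (z k))
    (hx : ∀ k : ℕ, x k = mvE U⁻¹ (z k)) :
    ∀ k : ℕ, x (k + 1) = appE (fun t => 1 / (1 + Real.exp (-t))) (mvE W (x k)) :=
  sigmoid_network_is_gradient_descent_general n U hU hUinv W hW f hf z x hz hx
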